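/- arXiv:2603.12525 — 4 statements merged into one kernel-verified Lean document; each statement's English description precedes it below -/
import Mathlib

section
/- Let q : {1,...,K} → ℝ≥0 with ∑_k q_k = 1 and β ∈ ℝ, and let T_cut > 0 satisfy T_cut = e^{−β} ∑_k max(q_k − T_cut, 0). Then the probability vector ρ* with ρ*_k = (e^{−β}/T_cut) max(q_k − T_cut, 0) minimizes L(ρ) := −∑_k q_k log(1 + e^β ρ_k) over all probability vectors ρ ∈ ℝ^K (ρ_k ≥ 0, ∑_k ρ_k = 1). -/
/-!
The constraint `∑ ρ = 1` is handled by a Lagrange multiplier `Tcut · e^β`: the Lagrangian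
`∑ q_k log (1 + e^β ρ_k) - Tcut e^β ∑ ρ_k` separates over `k`, and each summand, a concave
function of `y = e^β ρ_k ≥ 0`, is maximized at `y = max (q_k - Tcut) 0 / Tcut` (by `log z ≤ z - 1`).
The fixed-point equation for `Tcut` says exactly that this maximizer is a probability vector, so
the multiplier terms agree on both sides.
-/

open Real Finset

theorem mul_log_one_add_sub_mul_le {q T y : ℝ} (hq : 0 ≤ q) (hT : 0 < T) (hy : 0 ≤ y) :
    q * log (1 + y) - T * y ≤ q * log (1 + max (q - T) 0 / T) - T * (max (q - T) 0 / T) := by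
  rcases le_or_gt q T with hqT | hTq
  · rw [max_eq_right (by linarith)]
    have hlog : log (1 + y) ≤ y := by linarith [log_le_sub_one_of_pos (by linarith : 0 < 1 + y)]
    have : q * log (1 + y) ≤ T * y :=
      (mul_le_mul_of_nonneg_left hlog hq).trans (mul_le_mul_of_nonneg_right hqT hy)
    simpa using this
  · have hqpos : 0 < q := hT.trans hTq
    have hone_add : 1 + (q - T) / T = q / T := by field_simp; ring
    rw [max_eq_left (by linarith), hone_add]
    -- `log z ≤ z - 1` at `z = T (1 + y) / q`
    have hz := log_le_sub_one_of_pos (x := T * (1 + y) / q) (by positivity)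
    rw [log_div (by positivity) hqpos.ne', log_mul hT.ne' (by positivity)] at hz
    rw [log_div hqpos.ne' hT.ne']
    have hq_mul : q * (T * (1 + y) / q - 1) = T * (1 + y) - q := by field_simp
    have hT_mul : T * ((q - T) / T) = q - T := by field_simp
    linarith [hq_mul ▸ mul_le_mul_of_nonneg_left hz hq]

theorem ebransac_estimator_minimizes_general (K : ℕ) (q : Fin K → ℝ)
    (hq : ∀ k, 0 ≤ q k) (β : ℝ)
    (Tcut : ℝ) (hT : 0 < Tcut)
    (hfix : Tcut = Real.exp (-β) * ∑ k, max (q k - Tcut) 0) :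
    ∀ ρ : Fin K → ℝ, (∀ k, 0 ≤ ρ k) → (∑ k, ρ k = 1) →
      -(∑ k, q k * Real.log (1 + Real.exp β *
          ((Real.exp (-β) / Tcut) * max (q k - Tcut) 0)))
        ≤ -(∑ k, q k * Real.log (1 + Real.exp β * ρ k)) := by
  intro ρ hρ hρsum
  have hstar : ∀ k, exp β * (exp (-β) / Tcut * max (q k - Tcut) 0) = max (q k - Tcut) 0 / Tcut :=
    fun k => by rw [exp_neg]; field_simp
  have hmass : ∑ k, max (q k - Tcut) 0 = Tcut * exp β := by
    rw [exp_neg] at hfix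
    field_simp at hfix
    linarith
  have hlagrangian := Finset.sum_le_sum fun k (_ : k ∈ univ) =>
    mul_log_one_add_sub_mul_le (hq k) hT (mul_nonneg (exp_pos β).le (hρ k))
  simp only [Finset.sum_sub_distrib, ← Finset.mul_sum, ← Finset.sum_div, hρsum, hmass] at hlagrangian
  have hmultiplier : Tcut * (Tcut * exp β / Tcut) = Tcut * (exp β * 1) := by field_simp
  simp only [hstar]
  linarith

theorem ebransac_estimator_minimizes (K : ℕ) (hK : 0 < K) (q : Fin K → ℝ)
    (hq : ∀ k, 0 ≤ q k) (hsum : ∑ k, q k = 1) (β : ℝ)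
    (Tcut : ℝ) (hT : 0 < Tcut)
    (hfix : Tcut = Real.exp (-β) * ∑ k, max (q k - Tcut) 0) :
    ∀ ρ : Fin K → ℝ, (∀ k, 0 ≤ ρ k) → (∑ k, ρ k = 1) →
      -(∑ k, q k * Real.log (1 + Real.exp β *
          ((Real.exp (-β) / Tcut) * max (q k - Tcut) 0)))
        ≤ -(∑ k, q k * Real.log (1 + Real.exp β * ρ k)) :=
  ebransac_estimator_minimizes_general K q hq β Tcut hT hfix
end

section
/- Let q : {1,...,K} → ℝ≥0 be a probability vector with T* := max_k q_k > 0, b(T) := ∑_k max(q_k − T, 0), and for each β let T_cut(β) ∈ (0, T*) be the unique solution of T = e^{−β} b(T). Then T_cut is strictly decreasing in β: β_0 < β_1 implies T_cut(β_0) > T_cut(β_1). -/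
/-! `b(T) = ∑ₖ max (qₖ - T) 0` is antitone, so if `T_cut(β₀) ≤ T_cut(β₁)` then
`T_cut(β₁) = e^{-β₁} b(T_cut β₁) < e^{-β₀} b(T_cut β₁) ≤ e^{-β₀} b(T_cut β₀) = T_cut(β₀)`,
a contradiction; the strict step uses `b(T_cut β₁) > 0`, forced by `T_cut β₁ > 0`. -/

theorem antitone_sum_max_sub_zero {ι : Type*} [Fintype ι] (q : ι → ℝ) :
    Antitone fun T => ∑ k, max (q k - T) 0 :=
  fun _ _ hST => Finset.sum_le_sum fun _ _ => max_le_max (by linarith) le_rfl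

theorem lt_of_eq_mul_of_antitone {b : ℝ → ℝ} (hb : Antitone b) {c₀ c₁ T₀ T₁ : ℝ}
    (hc₁ : 0 < c₁) (hc : c₁ < c₀) (h₀ : T₀ = c₀ * b T₀) (h₁ : T₁ = c₁ * b T₁)
    (hT₁ : 0 < T₁) : T₁ < T₀ := by
  by_contra! hle
  have hbT₁ : 0 < b T₁ := pos_of_mul_pos_right (h₁ ▸ hT₁) hc₁.le
  refine lt_irrefl T₁ ?_
  calc T₁ = c₁ * b T₁ := h₁
    _ < c₀ * b T₁ := mul_lt_mul_of_pos_right hc hbT₁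
    _ ≤ c₀ * b T₀ := mul_le_mul_of_nonneg_left (hb hle) (hc₁.trans hc).le
    _ = T₀ := h₀.symm
    _ ≤ T₁ := hle

theorem Tcut_strictAnti_general (K : ℕ) (q : Fin K → ℝ)
    (Tstar : ℝ)
    (Tcut : ℝ → ℝ)
    (hmem : ∀ β, Tcut β ∈ Set.Ioo 0 Tstar)
    (hfix : ∀ β, Tcut β = Real.exp (-β) * ∑ k, max (q k - Tcut β) 0) :
    StrictAnti Tcut := fun β₀ β₁ hβ =>
  lt_of_eq_mul_of_antitone (antitone_sum_max_sub_zero q) (Real.exp_pos _)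
    (Real.exp_lt_exp.mpr (neg_lt_neg hβ)) (hfix β₀) (hfix β₁) (hmem β₁).1

theorem Tcut_strictAnti (K : ℕ) (hK : 0 < K) (q : Fin K → ℝ)
    (hq : ∀ k, 0 ≤ q k) (hsum : ∑ k, q k = 1)
    (Tstar : ℝ) (hTstar : IsGreatest (Set.range q) Tstar) (hTpos : 0 < Tstar)
    (Tcut : ℝ → ℝ)
    (hmem : ∀ β, Tcut β ∈ Set.Ioo 0 Tstar)
    (hfix : ∀ β, Tcut β = Real.exp (-β) * ∑ k, max (q k - Tcut β) 0) :
    StrictAnti Tcut :=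
  Tcut_strictAnti_general K q Tstar Tcut hmem hfix
end

section
/- Let q : {1,...,K} → ℝ≥0 be a probability vector with T* := max_k q_k > 0, and let T_cut(β) ∈ (0, T*) be the unique root of T = e^{−β} ∑_k max(q_k − T, 0). Then T_cut(β) → 0 as β → ∞ and T_cut(β) → T* as β → −∞. -/
/-!
Squeeze `T = T_cut(β)` between two explicit bounds. Since `0 < T`, every excess
`max (q k - T) 0` is at most `q k`, so the sum is at most `1` and `T ≤ e^{-β}`.
The largest coordinate alone contributes `T* - T`, so `T e^β ≥ T* - T`, i.e.
`T ≥ T* / (1 + e^β)`.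
-/

open Filter Topology Finset Real

section Excess

variable {ι : Type*} [Fintype ι] (q : ι → ℝ) (T : ℝ)

lemma sum_max_sub_zero_le_sum (hT : 0 ≤ T) (hq : ∀ k, 0 ≤ q k) :
    ∑ k, max (q k - T) 0 ≤ ∑ k, q k :=
  sum_le_sum fun k _ => max_le (by linarith) (hq k)

lemma sub_le_sum_max_sub_zero (i : ι) : q i - T ≤ ∑ k, max (q k - T) 0 :=
  (le_max_left _ _).trans <|
    single_le_sum (f := fun k => max (q k - T) 0) (fun _ _ => le_max_right _ _) (mem_univ i)

end Excess

section FixedPoint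

variable {T β S : ℝ}

lemma le_exp_neg_of_eq_exp_neg_mul (hfix : T = exp (-β) * S) (hS : S ≤ 1) : T ≤ exp (-β) :=
  hfix ▸ mul_le_of_le_one_right (exp_pos _).le hS

lemma div_one_add_exp_le_of_eq_exp_neg_mul {a : ℝ} (hfix : T = exp (-β) * S) (ha : a - T ≤ S) :
    a / (1 + exp β) ≤ T := by
  have hS : S = T * exp β := by
    rw [hfix, mul_comm, ← mul_assoc, ← exp_add, add_neg_cancel, exp_zero, one_mul]
  rw [div_le_iff₀ (by positivity)]
  linarith

end FixedPoint

lemma tendsto_div_one_add_exp_atBot (a : ℝ) :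
    Tendsto (fun β => a / (1 + exp β)) atBot (𝓝 a) := by
  have hden : Tendsto (fun β => 1 + exp β) atBot (𝓝 1) := by
    simpa using tendsto_exp_atBot.const_add 1
  simpa [div_eq_mul_inv] using (hden.inv₀ one_ne_zero).const_mul a

theorem Tcut_limits_general (K : ℕ) (q : Fin K → ℝ)
    (hq : ∀ k, 0 ≤ q k) (hsum : ∑ k, q k = 1)
    (Tstar : ℝ) (hTstar : IsGreatest (Set.range q) Tstar)
    (Tcut : ℝ → ℝ)
    (hmem : ∀ β, Tcut β ∈ Set.Ioo 0 Tstar)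
    (hfix : ∀ β, Tcut β = Real.exp (-β) * ∑ k, max (q k - Tcut β) 0) :
    Filter.Tendsto Tcut Filter.atTop (nhds 0) ∧
      Filter.Tendsto Tcut Filter.atBot (nhds Tstar) := by
  obtain ⟨k₀, hk₀⟩ := hTstar.1
  have hupper : ∀ β, Tcut β ≤ exp (-β) := fun β =>
    le_exp_neg_of_eq_exp_neg_mul (hfix β) (hsum ▸ sum_max_sub_zero_le_sum q _ (hmem β).1.le hq)
  have hlower : ∀ β, Tstar / (1 + exp β) ≤ Tcut β := fun β =>
    div_one_add_exp_le_of_eq_exp_neg_mul (hfix β) (hk₀ ▸ sub_le_sum_max_sub_zero q _ k₀)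
  exact ⟨tendsto_of_tendsto_of_tendsto_of_le_of_le tendsto_const_nhds
      tendsto_exp_neg_atTop_nhds_zero (fun β => (hmem β).1.le) hupper,
    tendsto_of_tendsto_of_tendsto_of_le_of_le (tendsto_div_one_add_exp_atBot Tstar)
      tendsto_const_nhds hlower fun β => (hmem β).2.le⟩

theorem Tcut_limits (K : ℕ) (hK : 0 < K) (q : Fin K → ℝ)
    (hq : ∀ k, 0 ≤ q k) (hsum : ∑ k, q k = 1)
    (Tstar : ℝ) (hTstar : IsGreatest (Set.range q) Tstar) (hTpos : 0 < Tstar)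
    (Tcut : ℝ → ℝ)
    (hmem : ∀ β, Tcut β ∈ Set.Ioo 0 Tstar)
    (hfix : ∀ β, Tcut β = Real.exp (-β) * ∑ k, max (q k - Tcut β) 0) :
    Filter.Tendsto Tcut Filter.atTop (nhds 0) ∧
      Filter.Tendsto Tcut Filter.atBot (nhds Tstar) :=
  Tcut_limits_general K q hq hsum Tstar hTstar Tcut hmem hfix
end

section
/- Let q : {1,...,K} → ℝ≥0 with ∑_k q_k = 1, β ∈ ℝ, ζ > 0 satisfying ∑_k max(q_k/ζ − e^{−β}, 0) = 1, and define ρ_k := max(q_k/ζ − e^{−β}, 0) and ν_k := ζ − q_k/(ρ_k + e^{−β}). Then the KKT complementarity conditions hold: ρ_k ≥ 0 for all k, ν_k ≥ 0 whenever ρ_k = 0, and ν_k = 0 whenever ρ_k > 0. -/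
section ReluDual

variable {q ζ c : ℝ}

theorem sub_div_relu_add_nonneg_of_relu_eq_zero (hζ : 0 < ζ) (hc : 0 < c)
    (h : max (q / ζ - c) 0 = 0) : 0 ≤ ζ - q / (max (q / ζ - c) 0 + c) := by
  have hle : q / ζ ≤ c := sub_nonpos.mp (max_eq_right_iff.mp h)
  rw [h, zero_add, sub_nonneg, div_le_iff₀ hc, ← div_le_iff₀' hζ]
  exact hle

theorem sub_div_relu_add_eq_zero_of_relu_pos (hc : 0 ≤ c)
    (h : 0 < max (q / ζ - c) 0) : ζ - q / (max (q / ζ - c) 0 + c) = 0 := by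
  have hlt : c < q / ζ := sub_pos.mp ((lt_max_iff.mp h).resolve_right (lt_irrefl 0))
  have hq : q ≠ 0 := by
    rintro rfl
    rw [zero_div] at hlt
    exact hlt.not_ge hc
  rw [max_eq_left (sub_pos.mpr hlt).le, sub_add_cancel, div_div_cancel₀ hq, sub_self]

end ReluDual

theorem kkt_conditions_general (K : ℕ) (q : Fin K → ℝ)
    (β : ℝ)
    (ζ : ℝ) (hζ : 0 < ζ) :
    ∀ k : Fin K,
      (0 ≤ max (q k / ζ - Real.exp (-β)) 0) ∧
      (max (q k / ζ - Real.exp (-β)) 0 = 0 →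
        0 ≤ ζ - q k / (max (q k / ζ - Real.exp (-β)) 0 + Real.exp (-β))) ∧
      (0 < max (q k / ζ - Real.exp (-β)) 0 →
        ζ - q k / (max (q k / ζ - Real.exp (-β)) 0 + Real.exp (-β)) = 0) := fun _ =>
  ⟨le_max_right _ _, sub_div_relu_add_nonneg_of_relu_eq_zero hζ (Real.exp_pos _),
    sub_div_relu_add_eq_zero_of_relu_pos (Real.exp_pos _).le⟩

theorem kkt_conditions (K : ℕ) (hK : 0 < K) (q : Fin K → ℝ)
    (hq : ∀ k, 0 ≤ q k) (hsum : ∑ k, q k = 1) (β : ℝ)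
    (ζ : ℝ) (hζ : 0 < ζ)
    (hnorm : ∑ k, max (q k / ζ - Real.exp (-β)) 0 = 1) :
    ∀ k : Fin K,
      (0 ≤ max (q k / ζ - Real.exp (-β)) 0) ∧
      (max (q k / ζ - Real.exp (-β)) 0 = 0 →
        0 ≤ ζ - q k / (max (q k / ζ - Real.exp (-β)) 0 + Real.exp (-β))) ∧
      (0 < max (q k / ζ - Real.exp (-β)) 0 →
        ζ - q k / (max (q k / ζ - Real.exp (-β)) 0 + Real.exp (-β)) = 0) :=
  kkt_conditions_general K q β ζ hζ
end
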